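/- Let s be a multiversion schedule and s' a single-version serial schedule view-equivalent to s. If a read b of transaction T_i has v_s(b) <<_s a for a write a of transaction T_j (rw-antidependency), and a is the <<_s-last write on its object, then T_i precedes T_j in s'. -/
import Mathlib


namespace MVCC

/-! Common formalization of multiversion schedules, dependencies,
conflict/view serializability, isolation levels and robustness. -/

inductive Action : Type
  | init | read | write | commit
deriving DecidableEq

/-- The ambient "environment": each operation belongs to a transaction,
has an action kind and an object; there is a special initial operation `op0`,
and each transaction has a designated commit operation and first operation. -/
structure Env (Obj Tr Opn : Type) where
  tr : Opn → Tr
  act : Opn → Action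
  obj : Opn → Obj
  op0 : Opn
  op0_act : act op0 = Action.init
  commitOf : Tr → Opn
  commit_tr : ∀ t, tr (commitOf t) = t
  commit_act : ∀ t, act (commitOf t) = Action.commit
  firstOf : Tr → Opn
  first_tr : ∀ t, tr (firstOf t) = t

variable {Obj Tr Opn : Type}

/-- Operations present in a schedule over the set of transactions `T'`. -/
def Env.opsOver (E : Env Obj Tr Opn) (T' : Set Tr) : Set Opn :=
  {a | a = E.op0 ∨ E.tr a ∈ T'}

def Env.isRead (E : Env Obj Tr Opn) (a : Opn) : Prop := E.act a = Action.read
def Env.isWrite (E : Env Obj Tr Opn) (a : Opn) : Prop := E.act a = Action.write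

/-- A transaction is read-only if it contains no write operations. -/
def Env.readOnly (E : Env Obj Tr Opn) (t : Tr) : Prop := ∀ a, E.tr a = t → ¬ E.isWrite a

/-- A multiversion schedule over the transactions `T'`:
an operation order `lt` (`<_s`), a version order `vlt` (`<<_s`)
and a version function `vf` (`v_s`). -/
structure Schedule (E : Env Obj Tr Opn) (T' : Set Tr) where
  lt : Opn → Opn → Prop
  vlt : Opn → Opn → Prop
  vf : Opn → Opn
  lt_trans : ∀ a b c, lt a b → lt b c → lt a c
  lt_irrefl : ∀ a, ¬ lt a a
  lt_total : ∀ a ∈ E.opsOver T', ∀ b ∈ E.opsOver T', a ≠ b → lt a b ∨ lt b a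
  op0_first : ∀ a ∈ E.opsOver T', a ≠ E.op0 → lt E.op0 a
  first_first : ∀ a ∈ E.opsOver T', a ≠ E.op0 → a ≠ E.firstOf (E.tr a) →
    lt (E.firstOf (E.tr a)) a
  commit_last : ∀ a ∈ E.opsOver T', a ≠ E.op0 → a ≠ E.commitOf (E.tr a) →
    lt a (E.commitOf (E.tr a))
  vlt_trans : ∀ a b c, vlt a b → vlt b c → vlt a c
  vlt_irrefl : ∀ a, ¬ vlt a a
  vlt_total : ∀ a ∈ E.opsOver T', ∀ b ∈ E.opsOver T', E.isWrite a → E.isWrite b →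
    E.obj a = E.obj b → a ≠ b → vlt a b ∨ vlt b a
  vlt_op0_first : ∀ a ∈ E.opsOver T', E.isWrite a → a ≠ E.op0 → vlt E.op0 a
  vf_read : ∀ a ∈ E.opsOver T', E.isRead a →
    vf a = E.op0 ∨ (vf a ∈ E.opsOver T' ∧ E.isWrite (vf a) ∧ E.obj (vf a) = E.obj a)
  vf_lt : ∀ a ∈ E.opsOver T', E.isRead a → lt (vf a) a

namespace Schedule

variable {E : Env Obj Tr Opn} {T' : Set Tr}

/-- ww-dependency: both writes on the same object, `b <<_s a`. -/
def wwDep (s : Schedule E T') (b a : Opn) : Prop :=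
  b ∈ E.opsOver T' ∧ a ∈ E.opsOver T' ∧ E.tr b ≠ E.tr a ∧ E.obj b = E.obj a ∧
    E.isWrite b ∧ E.isWrite a ∧ s.vlt b a

/-- wr-dependency: `b` write, `a` read, `b = v_s(a)` or `b <<_s v_s(a)`. -/
def wrDep (s : Schedule E T') (b a : Opn) : Prop :=
  b ∈ E.opsOver T' ∧ a ∈ E.opsOver T' ∧ E.tr b ≠ E.tr a ∧ E.obj b = E.obj a ∧
    E.isWrite b ∧ E.isRead a ∧ (b = s.vf a ∨ s.vlt b (s.vf a))

/-- rw-antidependency: `b` read, `a` write, `v_s(b) <<_s a`. -/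
def rwDep (s : Schedule E T') (b a : Opn) : Prop :=
  b ∈ E.opsOver T' ∧ a ∈ E.opsOver T' ∧ E.tr b ≠ E.tr a ∧ E.obj b = E.obj a ∧
    E.isRead b ∧ E.isWrite a ∧ s.vlt (s.vf b) a

/-- `a` depends on `b` in `s`. -/
def dep (s : Schedule E T') (b a : Opn) : Prop :=
  s.wwDep b a ∨ s.wrDep b a ∨ s.rwDep b a

/-- Conflict-equivalence: identical dependencies. -/
def confEquiv (s s' : Schedule E T') : Prop := ∀ b a, s.dep b a ↔ s'.dep b a

/-- `a` installs the last (`<<_s`-maximal) version of its object in `s`. -/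
def lastWrite (s : Schedule E T') (a : Opn) : Prop :=
  a ∈ E.opsOver T' ∧ E.isWrite a ∧
    ¬ ∃ c ∈ E.opsOver T', E.isWrite c ∧ E.obj c = E.obj a ∧ s.vlt a c

/-- View-equivalence: same version function on reads and the same
last installed version per object. -/
def viewEquiv (s s' : Schedule E T') : Prop :=
  (∀ a ∈ E.opsOver T', E.isRead a → s.vf a = s'.vf a) ∧
  (∀ a, s.lastWrite a ↔ s'.lastWrite a)

/-- Single-version schedule: the version order agrees with the operation order
on writes to the same object and every read reads the most recent write. -/
def singleVersion (s : Schedule E T') : Prop :=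
  (∀ a ∈ E.opsOver T', ∀ b ∈ E.opsOver T', E.isWrite a → E.isWrite b →
    E.obj a = E.obj b → (s.vlt a b ↔ s.lt a b)) ∧
  (∀ a ∈ E.opsOver T', E.isRead a →
    ¬ ∃ c ∈ E.opsOver T', E.isWrite c ∧ E.obj c = E.obj a ∧ s.lt (s.vf a) c ∧ s.lt c a)

/-- Serial schedule: transactions are not interleaved. -/
def serial (s : Schedule E T') : Prop :=
  ∀ a b c, a ∈ E.opsOver T' → b ∈ E.opsOver T' → c ∈ E.opsOver T' →
    a ≠ E.op0 → b ≠ E.op0 → c ≠ E.op0 →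
    s.lt a b → s.lt b c → E.tr a = E.tr c → E.tr b = E.tr a

def conflictSerializable (s : Schedule E T') : Prop :=
  ∃ s' : Schedule E T', s'.singleVersion ∧ s'.serial ∧ s.confEquiv s'

def viewSerializable (s : Schedule E T') : Prop :=
  ∃ s' : Schedule E T', s'.singleVersion ∧ s'.serial ∧ s.viewEquiv s'

/-- Edge of the serialization graph. -/
def sgEdge (s : Schedule E T') (ti tj : Tr) : Prop :=
  ∃ b a, s.dep b a ∧ E.tr b = ti ∧ E.tr a = tj

/-- Acyclicity of the serialization graph. -/
def sgAcyclic (s : Schedule E T') : Prop :=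
  ∀ t : Tr, ¬ Relation.TransGen s.sgEdge t t

/-- Transaction `ti` occurs (entirely) before transaction `tj` in `s`. -/
def transBefore (s : Schedule E T') (ti tj : Tr) : Prop :=
  ∀ p ∈ E.opsOver T', ∀ q ∈ E.opsOver T', p ≠ E.op0 → q ≠ E.op0 →
    E.tr p = ti → E.tr q = tj → s.lt p q

/-- Write operation `a` respects the commit order of `s`. -/
def respectsCommitOrder (s : Schedule E T') (a : Opn) : Prop :=
  ∀ b ∈ E.opsOver T', E.isWrite b → E.obj b = E.obj a → E.tr b ≠ E.tr a →
    (s.vlt a b ↔ s.lt (E.commitOf (E.tr a)) (E.commitOf (E.tr b)))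

/-- Read operation `b` is read-last-committed in `s` relative to operation `rel`. -/
def readLastCommitted (s : Schedule E T') (b rel : Opn) : Prop :=
  (s.vf b = E.op0 ∨ s.lt (E.commitOf (E.tr (s.vf b))) rel) ∧
  ¬ ∃ c ∈ E.opsOver T', E.isWrite c ∧ E.obj c = E.obj b ∧
      s.lt (E.commitOf (E.tr c)) rel ∧ s.vlt (s.vf b) c

/-- Transaction `t` exhibits a dirty write in `s`. -/
def dirtyWrite (s : Schedule E T') (t : Tr) : Prop :=
  ∃ b ∈ E.opsOver T', ∃ a ∈ E.opsOver T', E.isWrite b ∧ E.isWrite a ∧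
    E.obj b = E.obj a ∧ E.tr a = t ∧ E.tr b ≠ t ∧
    s.lt b a ∧ s.lt a (E.commitOf (E.tr b))

/-- Transaction `t` exhibits a concurrent write in `s`. -/
def concurrentWrite (s : Schedule E T') (t : Tr) : Prop :=
  ∃ b ∈ E.opsOver T', ∃ a ∈ E.opsOver T', E.isWrite b ∧ E.isWrite a ∧
    E.obj b = E.obj a ∧ E.tr a = t ∧ E.tr b ≠ t ∧
    s.lt b a ∧ s.lt (E.firstOf t) (E.commitOf (E.tr b))

/-- Two transactions are concurrent: each starts before the other commits. -/
def concurrent (s : Schedule E T') (ti tj : Tr) : Prop :=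
  s.lt (E.firstOf ti) (E.commitOf tj) ∧ s.lt (E.firstOf tj) (E.commitOf ti)

/-- Transaction `t` is allowed under Read Committed in `s`. -/
def allowedRC (s : Schedule E T') (t : Tr) : Prop :=
  (∀ a ∈ E.opsOver T', E.tr a = t → a ≠ E.op0 → E.isWrite a → s.respectsCommitOrder a) ∧
  (∀ a ∈ E.opsOver T', E.tr a = t → E.isRead a → s.readLastCommitted a a) ∧
  ¬ s.dirtyWrite t

/-- Transaction `t` is allowed under Snapshot Isolation in `s`. -/
def allowedSI (s : Schedule E T') (t : Tr) : Prop :=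
  (∀ a ∈ E.opsOver T', E.tr a = t → a ≠ E.op0 → E.isWrite a → s.respectsCommitOrder a) ∧
  (∀ a ∈ E.opsOver T', E.tr a = t → E.isRead a → s.readLastCommitted a (E.firstOf t)) ∧
  ¬ s.concurrentWrite t

/-- There is a rw-antidependency from (an operation of) `ti` to `tj`. -/
def rwEdge (s : Schedule E T') (ti tj : Tr) : Prop :=
  ∃ b a, s.rwDep b a ∧ E.tr b = ti ∧ E.tr a = tj

/-- Dangerous structure `t1 → t2 → t3`. -/
def dangerous (s : Schedule E T') (t1 t2 t3 : Tr) : Prop :=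
  s.rwEdge t1 t2 ∧ s.rwEdge t2 t3 ∧ s.concurrent t1 t2 ∧ s.concurrent t2 t3 ∧
  s.lt (E.commitOf t3) (E.commitOf t1) ∧ s.lt (E.commitOf t3) (E.commitOf t2) ∧
  (E.readOnly t1 → s.lt (E.commitOf t3) (E.firstOf t1))

end Schedule

inductive IsoLevel : Type
  | RC | SI | SSI
deriving DecidableEq

/-- A schedule is allowed under the `{RC,SI,SSI}`-allocation `f`. -/
def allowedUnder {E : Env Obj Tr Opn} {T' : Set Tr} (f : Tr → IsoLevel)
    (s : Schedule E T') : Prop :=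
  (∀ t ∈ T', f t = IsoLevel.RC → s.allowedRC t) ∧
  (∀ t ∈ T', f t ≠ IsoLevel.RC → s.allowedSI t) ∧
  ¬ ∃ t1 ∈ T', ∃ t2 ∈ T', ∃ t3 ∈ T', f t1 = IsoLevel.SSI ∧ f t2 = IsoLevel.SSI ∧
      f t3 = IsoLevel.SSI ∧ s.dangerous t1 t2 t3

/-- An (abstract) allocation: for each subset of transactions,
a set of allowed schedules over that subset. -/
def Allocation (E : Env Obj Tr Opn) : Type _ :=
  (T' : Set Tr) → Schedule E T' → Prop

/-- Conflict-robustness: every allowed schedule over every subset of `T`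
is conflict-serializable. -/
def conflictRobust (E : Env Obj Tr Opn) (T : Set Tr) (A : Allocation E) : Prop :=
  ∀ T' : Set Tr, T' ⊆ T → ∀ s : Schedule E T', A T' s → s.conflictSerializable

/-- View-robustness: every allowed schedule over every subset of `T`
is view-serializable. -/
def viewRobust (E : Env Obj Tr Opn) (T : Set Tr) (A : Allocation E) : Prop :=
  ∀ T' : Set Tr, T' ⊆ T → ∀ s : Schedule E T', A T' s → s.viewSerializable

/-- `s` is a generalized split schedule over the transactions `σ 0, …, σ (n-1)`
(cyclically ordered) with split operation `b1` of transaction `σ 0`. -/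
def isGenSplitWith {E : Env Obj Tr Opn} {T' : Set Tr} (s : Schedule E T')
    (n : ℕ) (σ : ZMod n → Tr) (b1 : Opn) : Prop :=
  2 ≤ n ∧ Function.Injective σ ∧ Set.range σ = T' ∧
  b1 ∈ E.opsOver T' ∧ b1 ≠ E.op0 ∧ E.tr b1 = σ 0 ∧
  -- shape: prefix(T1, b1) comes before all operations of T2 … Tn
  (∀ a ∈ E.opsOver T', a ≠ E.op0 → E.tr a = σ 0 → (a = b1 ∨ s.lt a b1) →
    ∀ c ∈ E.opsOver T', c ≠ E.op0 → E.tr c ≠ σ 0 → s.lt a c) ∧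
  -- shape: postfix(T1, b1) comes after all operations of T2 … Tn
  (∀ a ∈ E.opsOver T', a ≠ E.op0 → E.tr a = σ 0 → s.lt b1 a →
    ∀ c ∈ E.opsOver T', c ≠ E.op0 → E.tr c ≠ σ 0 → s.lt c a) ∧
  -- shape: T2 … Tn occur serially, in order
  (∀ i j : ZMod n, i ≠ 0 → j ≠ 0 → i.val < j.val →
    ∀ a ∈ E.opsOver T', ∀ c ∈ E.opsOver T', a ≠ E.op0 → c ≠ E.op0 →
      E.tr a = σ i → E.tr c = σ j → s.lt a c) ∧
  -- (1) there is a cyclic chain of dependencies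
  (∀ i : ZMod n, ∃ b a, s.dep b a ∧ E.tr b = σ i ∧ E.tr a = σ (i + 1)) ∧
  -- (2) the cycle is minimal: all dependencies are between consecutive pairs
  (∀ b a, s.dep b a → ∃ i : ZMod n, E.tr b = σ i ∧ E.tr a = σ (i + 1)) ∧
  -- (3) write operations respect the commit order
  (∀ a ∈ E.opsOver T', a ≠ E.op0 → E.isWrite a → s.respectsCommitOrder a)

/-- `s` is a generalized split schedule. -/
def isGenSplit {E : Env Obj Tr Opn} {T' : Set Tr} (s : Schedule E T') : Prop :=
  ∃ (n : ℕ) (σ : ZMod n → Tr) (b1 : Opn), isGenSplitWith s n σ b1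


/-- If there is a rw-antidependency from read `b` (of `T_i`) to write
`a` (of `T_j`) and `a` is the last installed write on its object, then `T_i`
precedes `T_j` in any view-equivalent single-version serial schedule. -/
theorem stmt19 {Obj Tr Opn : Type} {E : Env Obj Tr Opn} {T' : Set Tr}
    (s s' : Schedule E T') (hsv : s'.singleVersion) (hser : s'.serial)
    (hve : s.viewEquiv s')
    {b a : Opn} (hdep : s.rwDep b a) (hlast : s.lastWrite a) :
    s'.transBefore (E.tr b) (E.tr a) := by
  obtain ⟨hb, ha, htr, hobj, hrb, hwa, hvlt⟩ := hdep
  obtain ⟨hve1, hve2⟩ := hve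
  obtain ⟨ha', hwa', hnoc⟩ := (hve2 a).mp hlast
  have hvf : s.vf b = s'.vf b := hve1 b hb hrb
  have hbne0 : b ≠ E.op0 := by
    intro h
    have := hrb
    rw [Env.isRead, h, E.op0_act] at this
    exact absurd this (by simp)
  have hane0 : a ≠ E.op0 := by
    intro h
    have := hwa
    rw [Env.isWrite, h, E.op0_act] at this
    exact absurd this (by simp)
  have hab : b ≠ a := fun h => htr (by rw [h])
  have hba : s'.lt b a := by
    rcases s'.lt_total b hb a ha hab with h | h
    · exact h
    · exfalso
      have hvfa : s'.lt (s'.vf b) a := by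
        rcases s'.vf_read b hb hrb with h0 | ⟨hvfo, hvfw, hvfobj⟩
        · rw [h0]; exact s'.op0_first a ha hane0
        · have hne : s'.vf b ≠ a := by
            intro he
            rw [hvf, he] at hvlt
            exact s.vlt_irrefl a hvlt
          rcases s'.vlt_total _ hvfo a ha hvfw hwa (by rw [hvfobj, hobj]) hne with hv | hv
          · exact (hsv.1 _ hvfo a ha hvfw hwa (by rw [hvfobj, hobj])).mp hv
          · exact (hnoc ⟨s'.vf b, hvfo, hvfw, by rw [hvfobj, hobj], hv⟩).elim
      exact hsv.2 b hb hrb ⟨a, ha, hwa, hobj.symm, hvfa, h⟩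
  intro p hp q hq hp0 hq0 hpt hqt
  have hpq : p ≠ q := fun h => htr (by rw [← hpt, h, hqt])
  rcases s'.lt_total p hp q hq hpq with h | h
  · exact h
  · exfalso
    have hap : a ≠ p := fun h => htr (by rw [h, hpt])
    rcases s'.lt_total a ha p hp hap with h2 | h2
    · exact htr (hser b a p hb ha hp hbne0 hane0 hp0 hba h2 hpt.symm).symm
    · exact htr (by rw [← hpt, hser q p a hq hp ha hq0 hp0 hane0 h h2 hqt, hqt])

end MVCC
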